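/- Let n ≥ 1, let c : Fin n → ℝ, let y : Fin n → ℝ satisfy y_i ≥ 0 for all i and Σ_i y_i = 1, and let 0 ≤ ε < 2. Let s be a permutation of Fin n with c_{s_1} ≤ ⋯ ≤ c_{s_n} and let ỹ be the greedy output of Algorithm 1. If y_{s_n} + ε/2 ≤ 1, then the budget constraint is met with equality: Σ_i |ỹ_i − y_i| = ε. -/
import Mathlib

lemma greedy_aux_abs (v a : ℝ) (hv : 0 ≤ v) :
    |max 0 (v - max 0 a) - v| = max 0 a - max 0 (a - v) := by
  rcases le_total a 0 with h | h
  · rw [max_eq_left h, max_eq_left (by linarith : a - v ≤ 0), sub_zero,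
      max_eq_right hv]
    simp
  · rw [max_eq_right h]
    rcases le_total v a with hv2 | hv2
    · rw [max_eq_right (by linarith : (0:ℝ) ≤ a - v), max_eq_left (by linarith : v - a ≤ 0),
        zero_sub, abs_neg, abs_of_nonneg hv]
      ring
    · rw [max_eq_left (by linarith : a - v ≤ 0), max_eq_right (by linarith : (0:ℝ) ≤ v - a),
        abs_of_nonpos (by linarith : v - a - v ≤ 0)]
      ring

/-- **Budget-constraint stopping case of Algorithm 1.** If
`y (s last) + ε/2 ≤ 1`, the greedy output `ty` meets the `ℓ¹` budget with
equality: `‖ty - y‖₁ = ε`. -/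
theorem greedy_budget_case_tight
    (n : ℕ) (hn : 1 ≤ n) (c y : Fin n → ℝ)
    (hy0 : ∀ i, 0 ≤ y i) (hy1 : ∑ i, y i = 1)
    (ε : ℝ) (hε0 : 0 ≤ ε) (hε2 : ε < 2)
    (s : Equiv.Perm (Fin n))
    (hs : Monotone (fun t => c (s t)))
    (ty : Fin n → ℝ)
    (hty_last : ty (s ⟨n - 1, by omega⟩) = min (y (s ⟨n - 1, by omega⟩) + ε / 2) 1)
    (hty : ∀ t : Fin n, t ≠ ⟨n - 1, by omega⟩ →
      ty (s t) = max 0 (y (s t) - max 0 (ε / 2 - ∑ j ∈ Finset.Iio t, y (s j))))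
    (hcase : y (s ⟨n - 1, by omega⟩) + ε / 2 ≤ 1) :
    ∑ i, |ty i - y i| = ε := by
  set last : Fin n := ⟨n - 1, by omega⟩ with hlast
  set y' : ℕ → ℝ := fun k => if h : k < n then y (s ⟨k, h⟩) else 0 with hy'
  set f : ℕ → ℝ := fun k => max 0 (ε / 2 - ∑ j ∈ Finset.range k, y' j) with hf
  have hIio : ∀ t : Fin n, ∑ j ∈ Finset.Iio t, y (s j) = ∑ j ∈ Finset.range t.val, y' j := by
    intro t
    rw [← Nat.Iio_eq_range, ← Fin.map_valEmbedding_Iio, Finset.sum_map]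
    refine Finset.sum_congr rfl fun j _ => ?_
    simp [hy', j.isLt]
  -- total sum over y' of range n is 1
  have hsumn : ∑ j ∈ Finset.range n, y' j = 1 := by
    rw [← Fin.sum_univ_eq_sum_range y' n, ← hy1, ← Equiv.sum_comp s y]
    exact Finset.sum_congr rfl fun i _ => by simp [hy', i.isLt]
  have hsum_pred : ∑ j ∈ Finset.range (n - 1), y' j = 1 - y (s last) := by
    have h : n = (n - 1) + 1 := by omega
    rw [h, Finset.sum_range_succ] at hsumn
    have hlv : y' (n - 1) = y (s last) := by
      simp [hy', (by omega : n - 1 < n), hlast]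
    linarith
  rw [← Equiv.sum_comp s (fun i => |ty i - y i|)]
  rw [← Finset.sum_erase_add _ _ (Finset.mem_univ last)]
  have hlast_term : |ty (s last) - y (s last)| = ε / 2 := by
    rw [hty_last, min_eq_left hcase]
    rw [show y (s last) + ε / 2 - y (s last) = ε / 2 by ring, abs_of_nonneg (by linarith)]
  rw [hlast_term]
  have hmain : ∑ t ∈ Finset.univ.erase last, |ty (s t) - y (s t)|
      = ∑ k ∈ Finset.range (n - 1), (f k - f (k + 1)) := by
    refine Finset.sum_nbij' (fun t => (t : ℕ)) (fun k => if h : k < n then ⟨k, h⟩ else last)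
      ?_ ?_ ?_ ?_ ?_
    · intro t ht
      simp only [Finset.mem_erase, Finset.mem_univ, and_true] at ht
      simp only [Finset.mem_range]
      have : (t : ℕ) ≠ n - 1 := fun h => ht (by ext; simp [h, hlast])
      omega
    · intro k hk
      simp only [Finset.mem_range] at hk
      beta_reduce
      rw [dif_pos (by omega : k < n)]
      simp only [Finset.mem_erase, Finset.mem_univ, and_true]
      intro h
      have : k = n - 1 := by simpa [hlast, Fin.ext_iff] using h
      omega
    · intro t ht
      simp only [Finset.mem_erase, Finset.mem_univ, and_true] at ht
      beta_reduce
      rw [dif_pos t.isLt]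
    · intro k hk
      simp only [Finset.mem_range] at hk
      beta_reduce
      rw [dif_pos (by omega : k < n)]
    · intro t ht
      simp only [Finset.mem_erase, Finset.mem_univ, and_true] at ht
      rw [hty t ht, hIio t, hf]
      simp only
      rw [Finset.sum_range_succ]
      have hyv : y' (t : ℕ) = y (s t) := by simp [hy', t.isLt]
      rw [hyv, greedy_aux_abs _ _ (hy0 _)]
      ring_nf
  rw [hmain, Finset.sum_range_sub' f]
  have hf0 : f 0 = ε / 2 := by simp [hf]; linarith
  have hfn : f (n - 1) = 0 := by
    rw [hf]
    simp only
    rw [hsum_pred, max_eq_left (by linarith)]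
  rw [hf0, hfn]
  ring
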